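/- Let ρ be a density matrix on ℂ^d, and let {M_x}_{x∈X} be a finite family of d×d complex matrices with Σ_{x∈X} M_xᴴ M_x = I, where for each x the post-measurement branch is M_x ρ M_xᴴ. Suppose there exists x̂ ∈ X and 0 ≤ ε < 1 with tr(M_{x̂}ᴴ M_{x̂} ρ) ≥ 1 − ε, and suppose the post-measurement branch for outcome x̂ satisfies D(ρ, M_{x̂} ρ M_{x̂}ᴴ / tr(M_{x̂}ᴴ M_{x̂} ρ)) ≤ √ε. Then the total disturbance caused by the measurement (ignoring the outcome) satisfies D( ρ , Σ_{x∈X} M_x ρ M_xᴴ ) ≤ ε + √ε. -/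

import Mathlib

/-
The outcome-ignoring state `σ = ∑ₓ Mₓ ρ Mₓᴴ` dominates the branch `B = M_x̂ ρ M_x̂ᴴ`, whose
trace `t` is at least `1 - ε`. Since `t⁻¹ B - σ = (t⁻¹ - 1) B - (σ - B)` is a difference of positive
semidefinite matrices, its trace norm is at most the sum of their traces, `2 (1 - t)`; hence
`D(t⁻¹ B, σ) ≤ 1 - t ≤ ε`, and the triangle inequality for `D` gives the claim. The triangle
inequality itself comes from the same bound `‖P - N‖₁ ≤ tr P + tr N`, which is an equality for
the Jordan decomposition of a Hermitian matrix.
-/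

open scoped Matrix Kronecker BigOperators ComplexOrder

noncomputable def traceNorm {n : Type*} [Fintype n] [DecidableEq n]
    (A : Matrix n n ℂ) : ℝ :=
  (((Matrix.posSemidef_conjTranspose_mul_self A).1.eigenvectorUnitary : Matrix n n ℂ) *
    Matrix.diagonal (((↑) : ℝ → ℂ) ∘ ((Matrix.posSemidef_conjTranspose_mul_self A).1.eigenvalues · |>.sqrt)) *
    (star (Matrix.posSemidef_conjTranspose_mul_self A).1.eigenvectorUnitary : Matrix n n ℂ)).trace.re

noncomputable def traceDist {n : Type*} [Fintype n] [DecidableEq n]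
    (ρ σ : Matrix n n ℂ) : ℝ :=
  traceNorm (ρ - σ) / 2

def IsDensityMatrix {n : Type*} [Fintype n] (ρ : Matrix n n ℂ) : Prop :=
  ρ.PosSemidef ∧ ρ.trace = 1

open Matrix

namespace Matrix

variable {n ι : Type*}

lemma PosSemidef.re_diag_nonneg {A : Matrix n n ℂ} (hA : A.PosSemidef) (i : n) :
    0 ≤ (A i i).re :=
  (Complex.nonneg_iff.mp hA.diag_nonneg).1

variable [Fintype n]

lemma PosSemidef.ofReal_re_trace {A : Matrix n n ℂ} (hA : A.PosSemidef) :
    (A.trace.re : ℂ) = A.trace :=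
  (Complex.eq_re_of_ofReal_le (r := 0) (by simpa using hA.trace_nonneg)).symm

lemma PosSemidef.inv_trace_smul {A : Matrix n n ℂ} (hA : A.PosSemidef) :
    (A.trace⁻¹ • A).PosSemidef := by
  rw [← hA.ofReal_re_trace, ← Complex.ofReal_inv]
  exact hA.smul <| Complex.zero_le_real.mpr <|
    inv_nonneg.mpr (Complex.nonneg_iff.mp hA.trace_nonneg).1

lemma trace_conjStarAlgAut [DecidableEq n] {𝕜 : Type*} [RCLike 𝕜] (u : unitary (Matrix n n 𝕜))
    (A : Matrix n n 𝕜) : (Unitary.conjStarAlgAut 𝕜 _ u A).trace = A.trace := by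
  rw [Unitary.conjStarAlgAut_apply, trace_mul_cycle, Unitary.coe_star_mul_self, one_mul]

lemma IsHermitian.trace_cfc [DecidableEq n] {𝕜 : Type*} [RCLike 𝕜] {A : Matrix n n 𝕜}
    (hA : A.IsHermitian) (f : ℝ → ℝ) : (cfc f A).trace = ∑ i, (f (hA.eigenvalues i) : 𝕜) := by
  rw [hA.cfc_eq, IsHermitian.cfc, trace_conjStarAlgAut, trace_diagonal]
  rfl

variable [Fintype ι]

lemma trace_sum_mul_mul_conjTranspose [DecidableEq n] {R : Type*} [CommSemiring R]
    [StarRing R] {M : ι → Matrix n n R} (hM : ∑ x, (M x)ᴴ * M x = 1) (ρ : Matrix n n R) :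
    (∑ x, M x * ρ * (M x)ᴴ).trace = ρ.trace := by
  simp_rw [trace_sum, trace_mul_cycle (M _) ρ, ← trace_sum, ← Finset.sum_mul, hM, one_mul]

lemma PosSemidef.sum_mul_mul_conjTranspose_sub {ρ : Matrix n n ℂ} (hρ : ρ.PosSemidef)
    (M : ι → Matrix n n ℂ) (i : ι) :
    (∑ x, M x * ρ * (M x)ᴴ - M i * ρ * (M i)ᴴ).PosSemidef := by
  classical
  rw [← Finset.add_sum_erase _ _ (Finset.mem_univ i), add_sub_cancel_left]
  exact posSemidef_sum _ fun x _ => hρ.mul_mul_conjTranspose_same (M x)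

end Matrix

section TraceNorm

variable {n : Type*} [Fintype n] [DecidableEq n]

/- `traceNorm A` is, written out in an eigenbasis of `Aᴴ * A`, the trace of `CFC.sqrt (Aᴴ * A)`,
and positive square roots are unique. -/
open scoped MatrixOrder in
lemma traceNorm_eq_re_trace_of_sq_eq {A S : Matrix n n ℂ} (hS : S.PosSemidef)
    (h : S ^ 2 = Aᴴ * A) : traceNorm A = S.trace.re := by
  have hH := posSemidef_conjTranspose_mul_self A
  have hsqrt : CFC.sqrt (Aᴴ * A) = S := CFC.sqrt_unique (by rw [← h, sq]) hS.nonneg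
  rw [CFC.sqrt_eq_cfc, cfc_nnreal_eq_real _ (Aᴴ * A) hH.nonneg, hH.1.cfc_eq] at hsqrt
  rw [traceNorm, ← hsqrt, IsHermitian.cfc, Unitary.conjStarAlgAut_apply]
  congr 5
  funext i
  simp [Real.coe_sqrt, Real.coe_toNNReal', max_eq_left (hH.eigenvalues_nonneg i)]

open scoped MatrixOrder in
lemma Matrix.IsHermitian.traceNorm_eq_sum_abs_eigenvalues {A : Matrix n n ℂ}
    (hA : A.IsHermitian) : traceNorm A = ∑ i, |hA.eigenvalues i| := by
  have hS : (cfc (fun x : ℝ => |x|) A).PosSemidef :=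
    (cfc_nonneg (a := A) fun x _ => abs_nonneg (α := ℝ) x).posSemidef
  have hsq : cfc (fun x : ℝ => |x|) A ^ 2 = Aᴴ * A := by
    rw [← cfc_pow (fun x : ℝ => |x|) 2 A, hA.eq, ← sq]
    simp_rw [sq_abs]
    exact cfc_pow_id A 2
  rw [traceNorm_eq_re_trace_of_sq_eq hS hsq, hA.trace_cfc, Complex.re_sum]
  simp

open scoped MatrixOrder in
lemma Matrix.IsHermitian.exists_jordan_decomposition {A : Matrix n n ℂ}
    (hA : A.IsHermitian) : ∃ P N : Matrix n n ℂ, P.PosSemidef ∧ N.PosSemidef ∧ A = P - N ∧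
      traceNorm A = P.trace.re + N.trace.re := by
  refine ⟨cfc (fun x : ℝ => max x 0) A, cfc (fun x : ℝ => max (-x) 0) A, ?_, ?_, ?_, ?_⟩
  · exact (cfc_nonneg (a := A) fun x _ => le_max_right x 0).posSemidef
  · exact (cfc_nonneg (a := A) fun x _ => le_max_right (-x) 0).posSemidef
  · rw [← cfc_sub (fun x : ℝ => max x 0) (fun x : ℝ => max (-x) 0) A]
    simp_rw [max_zero_sub_max_neg_zero_eq_self]
    exact (cfc_id' ℝ A).symm
  · rw [hA.traceNorm_eq_sum_abs_eigenvalues, hA.trace_cfc, hA.trace_cfc, Complex.re_sum,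
      Complex.re_sum, ← Finset.sum_add_distrib]
    simp [max_zero_add_max_neg_zero_eq_abs_self]

lemma traceNorm_le_re_trace_add_re_trace {A P N : Matrix n n ℂ} (hP : P.PosSemidef)
    (hN : N.PosSemidef) (h : A = P - N) : traceNorm A ≤ P.trace.re + N.trace.re := by
  subst h
  have hA : (P - N).IsHermitian := hP.1.sub hN.1
  set c := Unitary.conjStarAlgAut ℂ (Matrix n n ℂ) (star hA.eigenvectorUnitary)
  have hc {B : Matrix n n ℂ} (hB : B.PosSemidef) : (c B).PosSemidef := by
    simpa [c, star_eq_conjTranspose] using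
      hB.conjTranspose_mul_mul_same (hA.eigenvectorUnitary : Matrix n n ℂ)
  -- In the eigenbasis of `P - N`, its eigenvalues are differences of diagonal entries of `P` and
  -- `N`, which are nonnegative.
  have heig (i : n) : hA.eigenvalues i = (c P i i).re - (c N i i).re := by
    have := congr_fun₂ hA.conjStarAlgAut_star_eigenvectorUnitary i i
    rw [map_sub] at this
    simpa [c] using congr_arg Complex.re this.symm
  calc traceNorm (P - N) = ∑ i, |hA.eigenvalues i| := hA.traceNorm_eq_sum_abs_eigenvalues
    _ ≤ ∑ i, ((c P i i).re + (c N i i).re) := by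
      refine Finset.sum_le_sum fun i _ => ?_
      rw [heig, abs_sub_le_iff]
      constructor <;> linarith [(hc hP).re_diag_nonneg i, (hc hN).re_diag_nonneg i]
    _ = (c P).trace.re + (c N).trace.re := by
      simp only [trace, diag, Complex.re_sum, Finset.sum_add_distrib]
    _ = P.trace.re + N.trace.re := by rw [trace_conjStarAlgAut, trace_conjStarAlgAut]

lemma traceNorm_add_le {A B : Matrix n n ℂ} (hA : A.IsHermitian) (hB : B.IsHermitian) :
    traceNorm (A + B) ≤ traceNorm A + traceNorm B := by
  obtain ⟨P, N, hP, hN, rfl, hPN⟩ := hA.exists_jordan_decomposition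
  obtain ⟨P', N', hP', hN', rfl, hPN'⟩ := hB.exists_jordan_decomposition
  have h := traceNorm_le_re_trace_add_re_trace (hP.add hP') (hN.add hN')
    (sub_add_sub_comm P N P' N')
  rw [trace_add, trace_add, Complex.add_re, Complex.add_re] at h
  linarith

lemma traceDist_triangle {ρ σ τ : Matrix n n ℂ} (hρ : ρ.IsHermitian) (hσ : σ.IsHermitian)
    (hτ : τ.IsHermitian) : traceDist ρ τ ≤ traceDist ρ σ + traceDist σ τ := by
  have h := traceNorm_add_le (hρ.sub hσ) (hσ.sub hτ)
  rw [sub_add_sub_cancel] at h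
  simp only [traceDist]
  linarith

lemma traceDist_inv_trace_smul_le {B C : Matrix n n ℂ} (hB : B.PosSemidef)
    (hCB : (C - B).PosSemidef) (hC : C.trace = 1) (hpos : 0 < B.trace.re) :
    traceDist (B.trace⁻¹ • B) C ≤ 1 - B.trace.re := by
  set t := B.trace.re
  have htB : B.trace = t := hB.ofReal_re_trace.symm
  have htCB : (C - B).trace.re = 1 - t := by
    rw [trace_sub, hC, Complex.sub_re, Complex.one_re]
  have ht1 : t ≤ 1 := by linarith [(Complex.nonneg_iff.mp hCB.trace_nonneg).1]
  have hcoef : (((t⁻¹ - 1 : ℝ) : ℂ) • B).PosSemidef :=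
    hB.smul (Complex.zero_le_real.mpr (sub_nonneg.mpr (one_le_inv₀ hpos |>.mpr ht1)))
  have hsplit : B.trace⁻¹ • B - C = ((t⁻¹ - 1 : ℝ) : ℂ) • B - (C - B) := by
    rw [htB, Complex.ofReal_sub, Complex.ofReal_inv, Complex.ofReal_one, sub_smul, one_smul]
    abel
  have h := traceNorm_le_re_trace_add_re_trace hcoef hCB hsplit
  rw [trace_smul, htB, smul_eq_mul, ← Complex.ofReal_mul, Complex.ofReal_re, htCB,
    sub_mul, inv_mul_cancel₀ hpos.ne', one_mul] at h
  rw [traceDist, htB]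
  linarith

end TraceNorm

theorem measurement_total_disturbance_general
    {d : ℕ} {X : Type} [Fintype X]
    (ρ : Matrix (Fin d) (Fin d) ℂ) (hρ : IsDensityMatrix ρ)
    (M : X → Matrix (Fin d) (Fin d) ℂ)
    (hM : ∑ x, (M x)ᴴ * M x = 1)
    (xhat : X) (ε : ℝ) (hε1 : ε < 1)
    (htr : 1 - ε ≤ (((M xhat)ᴴ * M xhat * ρ).trace).re)
    (hbranch : traceDist ρ
      ((((M xhat)ᴴ * M xhat * ρ).trace)⁻¹ • (M xhat * ρ * (M xhat)ᴴ)) ≤ Real.sqrt ε) :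
    traceDist ρ (∑ x, M x * ρ * (M x)ᴴ) ≤ ε + Real.sqrt ε := by
  set B := M xhat * ρ * (M xhat)ᴴ
  have hp : ((M xhat)ᴴ * M xhat * ρ).trace = B.trace := (trace_mul_cycle _ _ _).symm
  rw [hp] at htr hbranch
  have hB : B.PosSemidef := hρ.1.mul_mul_conjTranspose_same _
  have hσ : (∑ x, M x * ρ * (M x)ᴴ).PosSemidef :=
    posSemidef_sum _ fun x _ => hρ.1.mul_mul_conjTranspose_same (M x)
  calc traceDist ρ (∑ x, M x * ρ * (M x)ᴴ)
      ≤ traceDist ρ (B.trace⁻¹ • B) + traceDist (B.trace⁻¹ • B) (∑ x, M x * ρ * (M x)ᴴ) :=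
        traceDist_triangle hρ.1.1 hB.inv_trace_smul.1 hσ.1
    _ ≤ Real.sqrt ε + (1 - B.trace.re) :=
        add_le_add hbranch (traceDist_inv_trace_smul_le hB
          (hρ.1.sum_mul_mul_conjTranspose_sub M xhat)
          ((trace_sum_mul_mul_conjTranspose hM ρ).trans hρ.2) (by linarith))
    _ ≤ ε + Real.sqrt ε := by linarith

/-- if the measurement `{M_x}` detects `ρ` in the branch `x̂` with
probability at least `1 - ε`, and the post-measurement branch for `x̂` is `√ε`-close
to `ρ`, then the total (outcome-ignoring) disturbance is at most `ε + √ε`. -/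
theorem measurement_total_disturbance
    {d : ℕ} {X : Type} [Fintype X]
    (ρ : Matrix (Fin d) (Fin d) ℂ) (hρ : IsDensityMatrix ρ)
    (M : X → Matrix (Fin d) (Fin d) ℂ)
    (hM : ∑ x, (M x)ᴴ * M x = 1)
    (xhat : X) (ε : ℝ) (hε0 : 0 ≤ ε) (hε1 : ε < 1)
    (htr : 1 - ε ≤ (((M xhat)ᴴ * M xhat * ρ).trace).re)
    (hbranch : traceDist ρ
      ((((M xhat)ᴴ * M xhat * ρ).trace)⁻¹ • (M xhat * ρ * (M xhat)ᴴ)) ≤ Real.sqrt ε) :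
    traceDist ρ (∑ x, M x * ρ * (M x)ᴴ) ≤ ε + Real.sqrt ε :=
  measurement_total_disturbance_general ρ hρ M hM xhat ε hε1 htr hbranch
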